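/- Any storyline visualization whose event graph is G requires at least (L* − m)/(2Δ) crossings, where L* is the total edge length in an optimal linear ordering of G, m is the number of edges, and Δ is the maximum degree. Formally: for any initial linear ordering π₀ of the n characters and any sequence of adjacent transpositions such that every edge of G attains cost 0 at some point during the sequence, the number of transpositions is at least (L* − m)/(2Δ). -/
import Mathlib

open Finset

/-- The length of an edge `e` under an ordering `π` (vertex → position): `|π i - π j|`. -/
def edgeLen {n : ℕ} (π : Equiv.Perm (Fin n)) : Sym2 (Fin n) → ℕ :=
  Sym2.lift ⟨fun i j => (((π i : ℕ) : ℤ) - ((π j : ℕ) : ℤ)).natAbs,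
    fun i j => by simp only []; rw [← Int.natAbs_neg, neg_sub]⟩

/-- The total edge length of `G` under the ordering `π`. -/
def linArr {n : ℕ} (G : SimpleGraph (Fin n)) [DecidableRel G.Adj]
    (π : Equiv.Perm (Fin n)) : ℕ :=
  ∑ e ∈ G.edgeFinset, edgeLen π e

lemma aux_walk (a : ℕ → ℕ) (τ : ℕ) (h : ∀ t < τ, a t ≤ a (t + 1) + 1) :
    a 0 ≤ a τ + ∑ t ∈ Finset.range τ, (if a (t + 1) = a t then 0 else 1) := by
  induction τ with
  | zero => simp
  | succ k ih =>
    rw [Finset.sum_range_succ]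
    have hk : a k ≤ a (k + 1) + (if a (k + 1) = a k then 0 else 1) := by
      split
      · omega
      · exact h k (Nat.lt_succ_self k)
    have := ih (fun t ht => h t (ht.trans (Nat.lt_succ_self k)))
    omega

lemma swap_val_cases {n : ℕ} (p q x : Fin n) (hpq : p ≠ q) :
    ((Equiv.swap p q x : Fin n) : ℕ) = x ∨
      ((x : ℕ) = p ∧ ((Equiv.swap p q x : Fin n) : ℕ) = q) ∨
      ((x : ℕ) = q ∧ ((Equiv.swap p q x : Fin n) : ℕ) = p) := by
  rcases eq_or_ne x p with rfl | h1
  · right; left; simp [Equiv.swap_apply_left]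
  rcases eq_or_ne x q with rfl | h2
  · right; right; simp [Equiv.swap_apply_right]
  · left; rw [Equiv.swap_apply_of_ne_of_ne h1 h2]

lemma edgeLen_swap_le {n : ℕ} (σ : Equiv.Perm (Fin n)) (p q : Fin n)
    (hq : (q : ℕ) = (p : ℕ) + 1) (e : Sym2 (Fin n)) :
    edgeLen σ e ≤ edgeLen (σ.trans (Equiv.swap p q)) e + 1 := by
  have hpq : p ≠ q := by
    intro h; rw [h] at hq; omega
  induction e with
  | _ i j =>
    simp only [edgeLen, Sym2.lift_mk, Equiv.trans_apply]
    rcases swap_val_cases p q (σ i) hpq with h1 | ⟨h1, h1'⟩ | ⟨h1, h1'⟩ <;>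
      rcases swap_val_cases p q (σ j) hpq with h2 | ⟨h2, h2'⟩ | ⟨h2, h2'⟩ <;>
      omega

/-- Any storyline visualization with event graph `G` (an initial ordering followed by a
sequence of adjacent transpositions of positions, during which every edge of `G` has its
endpoints adjacent at some time) with `T` crossings satisfies `L* ≤ m + 2ΔT`, i.e. the
number of crossings is at least `(L* − m)/(2Δ)`, where `L*` is the optimal linear
arrangement value of `G`, `m` the number of edges, and `Δ` the maximum degree. -/
theorem storyline_crossing_lower_bound {n : ℕ} (G : SimpleGraph (Fin n))
    [DecidableRel G.Adj] (π : ℕ → Equiv.Perm (Fin n)) (T : ℕ)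
    (hstep : ∀ t < T, ∃ p q : Fin n, (q : ℕ) = (p : ℕ) + 1 ∧
      π (t + 1) = (π t).trans (Equiv.swap p q))
    (hmeet : ∀ e ∈ G.edgeFinset, ∃ t ≤ T, edgeLen (π t) e = 1) :
    univ.inf' univ_nonempty (linArr G) ≤ G.edgeFinset.card + 2 * G.maxDegree * T := by
  classical
  set C : Sym2 (Fin n) → ℕ → ℕ :=
    fun e t => if edgeLen (π (t + 1)) e = edgeLen (π t) e then 0 else 1 with hC
  -- per-edge bound
  have h1 : ∀ e ∈ G.edgeFinset,
      edgeLen (π 0) e ≤ 1 + ∑ t ∈ Finset.range T, C e t := by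
    intro e he
    obtain ⟨τ, hτT, hτ1⟩ := hmeet e he
    have hw := aux_walk (fun t => edgeLen (π t) e) τ (by
      intro t ht
      obtain ⟨p, q, hq, heq⟩ := hstep t (lt_of_lt_of_le ht hτT)
      simp only [heq]
      exact edgeLen_swap_le (π t) p q hq e)
    simp only [hτ1] at hw
    have hsub : ∑ t ∈ Finset.range τ, C e t ≤ ∑ t ∈ Finset.range T, C e t :=
      Finset.sum_le_sum_of_subset (Finset.range_subset_range.mpr hτT)
    calc edgeLen (π 0) e ≤ 1 + ∑ t ∈ Finset.range τ, C e t := hw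
      _ ≤ 1 + ∑ t ∈ Finset.range T, C e t := by omega
  -- per-step bound
  have h2 : ∀ t < T, ∑ e ∈ G.edgeFinset, C e t ≤ 2 * G.maxDegree := by
    intro t ht
    obtain ⟨p, q, hq, heq⟩ := hstep t ht
    set u := (π t).symm p with hu
    set v := (π t).symm q with hv
    have hsum : ∑ e ∈ G.edgeFinset, C e t =
        (G.edgeFinset.filter (fun e => ¬ edgeLen (π (t + 1)) e = edgeLen (π t) e)).card := by
      rw [Finset.card_filter]
      refine Finset.sum_congr rfl fun e _ => ?_
      simp only [hC]
      split_ifs <;> simp_all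
    rw [hsum]
    have hsubset : (G.edgeFinset.filter
          (fun e => ¬ edgeLen (π (t + 1)) e = edgeLen (π t) e)) ⊆
        G.incidenceFinset u ∪ G.incidenceFinset v := by
      intro e he
      rw [Finset.mem_filter] at he
      obtain ⟨heG, hch⟩ := he
      induction e with
      | _ i j =>
        by_contra hmem
        rw [Finset.mem_union, SimpleGraph.incidenceFinset_eq_filter,
          SimpleGraph.incidenceFinset_eq_filter, Finset.mem_filter, Finset.mem_filter,
          Sym2.mem_iff, Sym2.mem_iff] at hmem
        push_neg at hmem
        have hiu := (hmem.1 heG).1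
        have hju := (hmem.1 heG).2
        have hiv := (hmem.2 heG).1
        have hjv := (hmem.2 heG).2
        have hip : π t i ≠ p := fun h => hiu (by rw [hu, ← h]; simp)
        have hiq : π t i ≠ q := fun h => hiv (by rw [hv, ← h]; simp)
        have hjp : π t j ≠ p := fun h => hju (by rw [hu, ← h]; simp)
        have hjq : π t j ≠ q := fun h => hjv (by rw [hv, ← h]; simp)
        apply hch
        simp only [heq, edgeLen, Sym2.lift_mk, Equiv.trans_apply,
          Equiv.swap_apply_of_ne_of_ne hip hiq, Equiv.swap_apply_of_ne_of_ne hjp hjq]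
    calc (G.edgeFinset.filter
          (fun e => ¬ edgeLen (π (t + 1)) e = edgeLen (π t) e)).card
        ≤ (G.incidenceFinset u ∪ G.incidenceFinset v).card := Finset.card_le_card hsubset
      _ ≤ (G.incidenceFinset u).card + (G.incidenceFinset v).card := Finset.card_union_le _ _
      _ = G.degree u + G.degree v := by
          rw [SimpleGraph.card_incidenceFinset_eq_degree, SimpleGraph.card_incidenceFinset_eq_degree]
      _ ≤ 2 * G.maxDegree := by
          have := G.degree_le_maxDegree u
          have := G.degree_le_maxDegree v
          omega
  have main : linArr G (π 0) ≤ G.edgeFinset.card + 2 * G.maxDegree * T := by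
    calc linArr G (π 0) = ∑ e ∈ G.edgeFinset, edgeLen (π 0) e := rfl
      _ ≤ ∑ e ∈ G.edgeFinset, (1 + ∑ t ∈ Finset.range T, C e t) := Finset.sum_le_sum h1
      _ = G.edgeFinset.card + ∑ e ∈ G.edgeFinset, ∑ t ∈ Finset.range T, C e t := by
          rw [Finset.sum_add_distrib, Finset.sum_const, smul_eq_mul, mul_one]
      _ = G.edgeFinset.card + ∑ t ∈ Finset.range T, ∑ e ∈ G.edgeFinset, C e t := by
          rw [Finset.sum_comm]
      _ ≤ G.edgeFinset.card + ∑ t ∈ Finset.range T, 2 * G.maxDegree := by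
          gcongr with t htm
          exact h2 t (Finset.mem_range.mp htm)
      _ = G.edgeFinset.card + 2 * G.maxDegree * T := by
          rw [Finset.sum_const, Finset.card_range, smul_eq_mul, mul_comm]
  exact le_trans (Finset.inf'_le _ (Finset.mem_univ (π 0))) main
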